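/- arXiv:1407.1179 — 4 statements merged into one kernel-verified Lean document; each statement's English description precedes it below -/
import Mathlib

section
/- A set P ⊆ ℤ is a Birkhoff recurrence set of order d for every integer d ≥ 1 if and only if P contains finite IP-sets of arbitrarily long lengths (in the paper's notation, F_{B_∞} = F_{fip}). -/
open scoped Classical
open MeasureTheory Filter Topology

noncomputable section

/-- Integer iterate of a bijection `T` of a set: `zIter T n = T^n`. -/
def zIter {X : Type*} (T : Equiv.Perm X) (n : ℤ) : X → X := ⇑(T ^ n)

/-- Integer iterate of a homeomorphism. -/
def hIter {X : Type*} [TopologicalSpace X] (T : X ≃ₜ X) (n : ℤ) : X → X :=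
  zIter T.toEquiv n

/-- The integer nearest to `a`, with ties broken towards the smaller integer.
This is the `⌈·⌉` of the paper. -/
def nearInt (a : ℝ) : ℤ := if a - (⌊a⌋ : ℝ) ≤ 1/2 then ⌊a⌋ else ⌈a⌉

/-- The distance from `a` to the nearest integer, i.e. `‖a‖` in the paper. -/
def distInt (a : ℝ) : ℝ := |a - (nearInt a : ℝ)|

/-- Generalized polynomials of degree at most `d` (for `d ≥ 1`):
`GP 1` is the smallest collection of functions `ℤ → ℝ` containing `n ↦ a n`
and closed under taking the nearest integer, scalar multiplication and finite sums;
`GP d` moreover contains every `GP e` for `e < d` and all functions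
`n ↦ a₀ n^{p₀} ⌈f₁(n)⌉ ⋯ ⌈f k (n)⌉` with `f l ∈ GP (p l)` and `p₀ + ∑ p l = d`. -/
inductive GP : ℕ → (ℤ → ℝ) → Prop
  | lin (a : ℝ) : GP 1 (fun n => a * n)
  | mono {d : ℕ} (hd : 1 ≤ d) (a₀ : ℝ) (p₀ : ℕ) {k : ℕ} (p : Fin k → ℕ)
      (f : Fin k → ℤ → ℝ) (hf : ∀ l, GP (p l) (f l)) (hsum : p₀ + ∑ l, p l = d) :
      GP d (fun n => a₀ * (n : ℝ) ^ p₀ * ∏ l, (nearInt (f l n) : ℝ))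
  | incl {d e : ℕ} (hed : e < d) {f : ℤ → ℝ} (hf : GP e f) : GP d f
  | ceil {d : ℕ} {f : ℤ → ℝ} (hf : GP d f) : GP d (fun n => (nearInt (f n) : ℝ))
  | smul {d : ℕ} (c : ℝ) {f : ℤ → ℝ} (hf : GP d f) : GP d (fun n => c * f n)
  | add {d : ℕ} {f g : ℤ → ℝ} (hf : GP d f) (hg : GP d g) : GP d (fun n => f n + g n)

/-- The bracket expression `L(a₁, …, a_ℓ) = a₁⌈L(a₂, …, a_ℓ)⌉`, `L(a) = a`. -/
def Lfun : List ℝ → ℝ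
  | [] => 0
  | [a] => a
  | a :: b :: rest => a * (nearInt (Lfun (b :: rest)) : ℝ)

/-- Special generalized polynomials of degree at most `d`:
the functions `n ↦ L(n^{j₁} a₁, …, n^{j_ℓ} a_ℓ)` with `1 ≤ ℓ`, `j t ≥ 1`, `∑ j t ≤ d`. -/
def SGP (d : ℕ) (g : ℤ → ℝ) : Prop :=
  ∃ ℓ : ℕ, 1 ≤ ℓ ∧ ∃ (a : Fin ℓ → ℝ) (j : Fin ℓ → ℕ),
    (∀ t, 1 ≤ j t) ∧ (∑ t, j t) ≤ d ∧
    g = fun n : ℤ => Lfun (List.ofFn fun t => (n : ℝ) ^ (j t) * a t)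

/-- `FS({n i}) = {n_{i₁} + ⋯ + n_{i_k} : i₁ < ⋯ < i_k}`, the set of finite sums. -/
def FS {d : ℕ} (n : Fin d → ℤ) : Set ℤ :=
  { m | ∃ I : Finset (Fin d), I.Nonempty ∧ m = ∑ i ∈ I, n i }

/-- `SG d P`: sums `p_{i₁} + ⋯ + p_{i_k}` over strictly increasing finite index
sequences whose consecutive gaps are at most `d` (infinite sequence `P`). -/
def SG (d : ℕ) (P : ℕ → ℤ) : Set ℤ :=
  { n | ∃ k : ℕ, ∃ i : Fin (k + 1) → ℕ, StrictMono i ∧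
      (∀ t : Fin k, i t.succ - i t.castSucc ≤ d) ∧ n = ∑ t, P (i t) }

/-- `SGfin d P` : the same for a finite sequence `P` of length `m`. -/
def SGfin (d : ℕ) {m : ℕ} (P : Fin m → ℤ) : Set ℤ :=
  { n | ∃ k : ℕ, ∃ i : Fin (k + 1) → Fin m, StrictMono i ∧
      (∀ t : Fin k, (i t.succ : ℕ) - (i t.castSucc : ℕ) ≤ d) ∧ n = ∑ t, P (i t) }

/-- A set of integers is syndetic if it has bounded gaps. -/
def Syndetic (A : Set ℤ) : Prop :=
  ∃ N : ℕ, ∀ i : ℤ, ∃ j, i ≤ j ∧ j ≤ i + N ∧ j ∈ A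

/-- `F` has positive upper Banach density. -/
def PosUpperBanachDensity (F : Set ℤ) : Prop :=
  ∃ δ : ℝ, 0 < δ ∧ ∀ N : ℕ, ∃ (a : ℤ) (L : ℕ), N ≤ L ∧ 1 ≤ L ∧
    δ * L ≤ ((Finset.Icc a (a + L - 1)).filter (fun x => x ∈ F)).card

/-- A set `A ⊆ ℤ` contains finite IP-sets of arbitrarily long lengths. -/
def ContainsArbLongFIP (A : Set ℤ) : Prop :=
  ∀ k : ℕ, 1 ≤ k → ∃ p : Fin k → ℤ, FS p ⊆ A

/-- A topological dynamical system `(X, T)` is minimal: every orbit is dense. -/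
def MinimalTDS {X : Type*} [TopologicalSpace X] (T : X ≃ₜ X) : Prop :=
  ∀ x : X, Dense (Set.range fun n : ℤ => hIter T n x)

/-- `Nset T x U = N(x, U) = {n ∈ ℤ : Tⁿ x ∈ U}`. -/
def Nset {X : Type*} [TopologicalSpace X] (T : X ≃ₜ X) (x : X) (U : Set X) : Set ℤ :=
  { n : ℤ | hIter T n x ∈ U }

/-- The regionally proximal relation of order `d`. -/
def RPd {X : Type*} [MetricSpace X] (T : X ≃ₜ X) (d : ℕ) (x y : X) : Prop :=
  ∀ δ : ℝ, 0 < δ → ∃ (x' y' : X) (n : Fin d → ℤ),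
    dist x x' < δ ∧ dist y y' < δ ∧
    ∀ ε : Finset (Fin d), ε.Nonempty →
      dist (hIter T (∑ i ∈ ε, n i) x') (hIter T (∑ i ∈ ε, n i) y') < δ

/-- `S` is a set of `d`-topological recurrence. -/
def TopRecSet (d : ℕ) (S : Set ℤ) : Prop :=
  ∀ (X : Type) [MetricSpace X] [CompactSpace X] (T : X ≃ₜ X), MinimalTDS T →
    ∀ U : Set X, IsOpen U → U.Nonempty →
      ∃ n ∈ S, (⋂ j ∈ Finset.range (d + 1), hIter T ((j : ℤ) * n) ⁻¹' U).Nonempty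

/-- `S` is a set of `d`-recurrence (measurable recurrence). -/
def MeasRecSet (d : ℕ) (S : Set ℤ) : Prop :=
  ∀ (Y : Type) [MeasurableSpace Y] [StandardBorelSpace Y]
    (μ : Measure Y) [IsProbabilityMeasure μ] (T : Y ≃ᵐ Y),
    MeasurePreserving (⇑T) μ μ →
    ∀ A : Set Y, MeasurableSet A → 0 < μ A →
      ∃ n ∈ S, 0 < μ (⋂ j ∈ Finset.range (d + 1), zIter T.toEquiv ((j : ℤ) * n) ⁻¹' A)

/-- `P` is a Birkhoff recurrence set of order `d`. -/
def BirkhoffRecSet (d : ℕ) (P : Set ℤ) : Prop :=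
  ∀ (X : Type) [MetricSpace X] [CompactSpace X] (T : X ≃ₜ X), MinimalTDS T →
    ∀ U : Set X, IsOpen U → U.Nonempty →
      ∃ n : Fin d → ℤ, FS n ⊆ P ∧ (U ∩ ⋂ m ∈ FS n, hIter T m ⁻¹' U).Nonempty

/-- `F` is a Poincaré recurrence set of order `d`. -/
def PoincareRecSet (d : ℕ) (F : Set ℤ) : Prop :=
  ∀ (Y : Type) [MeasurableSpace Y] [StandardBorelSpace Y]
    (μ : Measure Y) [IsProbabilityMeasure μ] (T : Y ≃ᵐ Y),
    MeasurePreserving (⇑T) μ μ →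
    ∀ A : Set Y, MeasurableSet A → 0 < μ A →
      ∃ n : Fin d → ℤ, FS n ⊆ F ∧ 0 < μ (A ∩ ⋂ m ∈ FS n, zIter T.toEquiv m ⁻¹' A)

/-- The upper unitriangular matrix `M(a)` with entries `(M(a))_{i, i+k} = a i k`
(1-based indexing). -/
def Mmat (d : ℕ) (a : ℕ → ℕ → ℝ) : Matrix (Fin (d + 1)) (Fin (d + 1)) ℝ :=
  fun r c =>
    if (r : ℕ) = (c : ℕ) then 1
    else if (r : ℕ) < (c : ℕ) then a ((r : ℕ) + 1) ((c : ℕ) - (r : ℕ)) else 0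

/-- `P_ℓ(a; i, k) = ∑ a_i^{s₁} a_{i+s₁}^{s₂} ⋯`, sum over `(s₁,…,s_ℓ) ∈ {1,…,k}^ℓ`
with `s₁ + ⋯ + s_ℓ = k`. -/
def Ppoly (a : ℕ → ℕ → ℝ) (i k ℓ : ℕ) : ℝ :=
  ∑ s ∈ Finset.univ.filter (fun s : Fin ℓ → Fin k => (∑ t, ((s t : ℕ) + 1)) = k),
    ∏ t : Fin ℓ,
      a (i + ∑ u ∈ Finset.univ.filter (fun u : Fin ℓ => u < t), ((s u : ℕ) + 1))
        ((s t : ℕ) + 1)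

/-- The upper unitriangular matrix with superdiagonal `α₁, …, α_d` (1-based). -/
def Amat (d : ℕ) (α : ℕ → ℝ) : Matrix (Fin (d + 1)) (Fin (d + 1)) ℝ :=
  fun r c =>
    if (r : ℕ) = (c : ℕ) then 1
    else if (c : ℕ) = (r : ℕ) + 1 then α ((r : ℕ) + 1) else 0

end

/-!
A minimal system is covered by finitely many translates `T^{-c} U`, so fixing a point `x₀` and
choosing for each `m` a `c` with `T^{c+m} x₀ ∈ U` colours `ℤ` with finitely many colours. By
Folkman's theorem, the index set of a long enough finite IP-set `FS(p)` ⊆ `P` contains `d + 1`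
disjoint blocks all of whose unions get the same colour; the sums of `p` over the blocks
`1, …, d` are the required `nᵢ`, and `T^{c} T^{a} x₀`, with `a` the sum over block `0`, is the
required point of `U`. Conversely, applied to the one-point system, Birkhoff recurrence of order
`k` only says that `P` contains some `FS(n₁, …, n_k)`.
-/

open Function

namespace Hindman

theorem FS.exists_finsetSum_eq {M : Type*} [AddCommMonoid M] {a : Stream' M} {m : M}
    (hm : m ∈ FS a) : ∃ J : Finset ℕ, J.Nonempty ∧ m = ∑ j ∈ J, a.get j := by
  induction hm with
  | head' a => exact ⟨{0}, Finset.singleton_nonempty 0, by simp [Stream'.head]⟩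
  | tail' a m _ ih =>
    obtain ⟨J, hJ, rfl⟩ := ih
    exact ⟨J.map ⟨Nat.succ, Nat.succ_injective⟩, hJ.map, by simp [Stream'.get_tail]⟩
  | cons' a m _ ih =>
    obtain ⟨J, -, rfl⟩ := ih
    have h0 : 0 ∉ J.map ⟨Nat.succ, Nat.succ_injective⟩ := by simp
    refine ⟨insert 0 (J.map ⟨Nat.succ, Nat.succ_injective⟩), Finset.insert_nonempty _ _, ?_⟩
    rw [Finset.sum_insert h0, Finset.sum_map]
    simp [Stream'.head, Stream'.get_tail]

end Hindman

structure IsMonochromaticUnionFamily {α β ι : Type*} [DecidableEq α] (χ : Finset α → β)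
    (S : ι → Finset α) (c : β) : Prop where
  nonempty : ∀ t, (S t).Nonempty
  pairwise_disjoint : Pairwise (Disjoint on S)
  biUnion_eq : ∀ I : Finset ι, I.Nonempty → χ (I.biUnion S) = c

theorem Multiset.toFinset_finsetSum {α ι : Type*} [DecidableEq α] (I : Finset ι)
    (f : ι → Multiset α) : (∑ t ∈ I, f t).toFinset = I.biUnion fun t => (f t).toFinset := by
  classical
  induction I using Finset.induction_on with
  | empty => simp
  | insert t I ht ih =>
    rw [Finset.sum_insert ht, Multiset.toFinset_add, ih, Finset.biUnion_insert]

/-- Folkman's theorem (finite unions theorem), derived from Hindman's theorem in the monoid of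
multisets: finite sums of the singletons `{i}` are exactly the nonempty finite sets, and a sum of
two of them is again one only if they are disjoint. -/
theorem exists_isMonochromaticUnionFamily {β : Type*} [Finite β] (χ : Finset ℕ → β) (n : ℕ) :
    ∃ (S : Fin n → Finset ℕ) (c : β), IsMonochromaticUnionFamily χ S c := by
  let a : Stream' (Multiset ℕ) := fun i => {i}
  have ha : ∀ m ∈ Hindman.FS a, m.Nodup ∧ m ≠ 0 := by
    intro m hm
    obtain ⟨J, hJ, rfl⟩ := Hindman.FS.exists_finsetSum_eq hm
    have hJval : ∑ j ∈ J, a.get j = J.val := Multiset.sum_map_singleton J.val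
    rw [hJval]
    exact ⟨J.nodup, by simpa [Finset.nonempty_iff_ne_empty] using hJ⟩
  obtain ⟨-, ⟨c, rfl⟩, b, hb⟩ := Hindman.FS_partition_regular a
    (Set.range fun c => Hindman.FS a ∩ {m | χ m.toFinset = c}) (Set.finite_range _)
    (fun m hm => Set.mem_sUnion.2 ⟨_, ⟨χ m.toFinset, rfl⟩, hm, rfl⟩)
  have hsum : ∀ I : Finset (Fin n), I.Nonempty →
      (∑ t ∈ I, b.get t) ∈ Hindman.FS a ∩ {m | χ m.toFinset = c} := by
    intro I hI
    have := Hindman.FS.finsetSum b (I.map Fin.valEmbedding) (hI.map)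
    rw [Finset.sum_map] at this
    exact hb this
  refine ⟨fun t => (b.get t).toFinset, c, ⟨fun t => ?_, fun t u htu => ?_, fun I hI => ?_⟩⟩
  · have := ha _ (hsum {t} (Finset.singleton_nonempty t)).1
    rw [Finset.sum_singleton] at this
    exact Multiset.toFinset_nonempty.2 this.2
  · have := ha _ (hsum {t, u} (Finset.insert_nonempty _ _)).1
    rw [Finset.sum_pair htu, Multiset.nodup_add] at this
    exact Multiset.disjoint_toFinset.2 this.1.2.2
  · rw [← Multiset.toFinset_finsetSum]
    exact (hsum I hI).2

theorem IsMonochromaticUnionFamily.preimage {α γ β ι : Type*} [DecidableEq α] [DecidableEq γ]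
    {f : α → γ} (hf : Injective f) {χ : Finset α → β} {S : ι → Finset γ} {c : β}
    (hdisj : Pairwise (Disjoint on S)) (hmem : ∀ t, ∃ a, f a ∈ S t)
    (hχ : ∀ I : Finset ι, I.Nonempty → χ ((I.biUnion S).preimage f hf.injOn) = c) :
    IsMonochromaticUnionFamily χ (fun t => (S t).preimage f hf.injOn) c where
  nonempty t := let ⟨a, ha⟩ := hmem t; ⟨a, Finset.mem_preimage.2 ha⟩
  pairwise_disjoint t u htu := Finset.disjoint_preimage (hdisj htu)
  biUnion_eq I hI := by
    convert hχ I hI using 2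
    ext a
    simp

/-- The finite form of Folkman's theorem, by compactness: a limit, along an ultrafilter, of
colourings without such a family would be a colouring of all finite sets of `ℕ` without one. -/
theorem eventually_exists_isMonochromaticUnionFamily (β : Type*) [Finite β] (n : ℕ) :
    ∀ᶠ K in atTop, ∀ χ : Finset (Fin K) → β,
      ∃ (S : Fin n → Finset (Fin K)) (c : β), IsMonochromaticUnionFamily χ S c := by
  by_contra h
  rw [Filter.not_eventually] at h
  obtain ⟨U, hU⟩ := Filter.exists_ultrafilter_iff.2 (Filter.frequently_iff_neBot.1 h)
  obtain ⟨hUtop, hUbad⟩ := le_inf_iff.1 hU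
  obtain ⟨K₀, hK₀⟩ := h.exists
  obtain ⟨χ₀, -⟩ := not_forall.1 hK₀
  have : Nonempty β := ⟨χ₀ ∅⟩
  have hbad : ∀ K, ∃ χ : Finset (Fin K) → β, (¬∀ χ' : Finset (Fin K) → β,
      ∃ (S : Fin n → Finset (Fin K)) (c : β), IsMonochromaticUnionFamily χ' S c) →
      ∀ (S : Fin n → Finset (Fin K)) c, ¬IsMonochromaticUnionFamily χ S c := by
    intro K
    by_cases hK : ∀ χ' : Finset (Fin K) → β, ∃ (S : Fin n → Finset (Fin K)) (c : β),
        IsMonochromaticUnionFamily χ' S c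
    · exact ⟨fun _ => Classical.arbitrary β, fun h => (h hK).elim⟩
    · obtain ⟨χ, hχ⟩ := not_forall.1 hK
      exact ⟨χ, fun _ S c hS => hχ ⟨S, c, hS⟩⟩
  choose χ hχ using hbad
  let restrict (K : ℕ) (W : Finset ℕ) : Finset (Fin K) :=
    W.preimage Fin.val Fin.val_injective.injOn
  have hlim : ∀ W, ∃ c, ∀ᶠ K in (U : Filter ℕ), χ K (restrict K W) = c := by
    intro W
    obtain ⟨c, hc⟩ := (U.map fun K => χ K (restrict K W)).eq_pure_of_finite
    have : (fun K => χ K (restrict K W)) ⁻¹' {c} ∈ U :=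
      Ultrafilter.mem_map.1 (by rw [hc]; exact Ultrafilter.mem_pure.2 rfl)
    exact ⟨c, this⟩
  choose χlim hχlim using hlim
  obtain ⟨S, c, hS⟩ := exists_isMonochromaticUnionFamily χlim n
  have hmem : ∀ᶠ K in (U : Filter ℕ), ∀ t, ∃ a : Fin K, (a : ℕ) ∈ S t :=
    Filter.eventually_all.2 fun t =>
      let ⟨i, hi⟩ := hS.nonempty t
      hUtop ((eventually_gt_atTop i).mono fun K hK => ⟨⟨i, hK⟩, hi⟩)
  have hcol : ∀ᶠ K in (U : Filter ℕ), ∀ I : Finset (Fin n), I.Nonempty →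
      χ K (restrict K (I.biUnion S)) = c :=
    Filter.eventually_all.2 fun I =>
      (hχlim (I.biUnion S)).mono fun K hK hI => hK.trans (hS.biUnion_eq I hI)
  obtain ⟨K, ⟨hK_mem, hK_col⟩, hK_bad⟩ :=
    ((hmem.and hcol).and (le_principal_iff.1 hUbad)).exists
  exact hχ K hK_bad _ c (.preimage Fin.val_injective hS.pairwise_disjoint hK_mem hK_col)

theorem ContainsArbLongFIP.exists_FS_subset_forall_eq {P : Set ℤ} (hP : ContainsArbLongFIP P)
    {β : Type*} [Finite β] (col : ℤ → β) (d : ℕ) :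
    ∃ (a : ℤ) (n : Fin d → ℤ), FS n ⊆ P ∧ ∀ m ∈ FS n, col (a + m) = col a := by
  obtain ⟨K, hK, hK1⟩ :=
    ((eventually_exists_isMonochromaticUnionFamily β (d + 1)).and (eventually_ge_atTop 1)).exists
  obtain ⟨p, hp⟩ := hP K hK1
  let σ (W : Finset (Fin K)) : ℤ := ∑ i ∈ W, p i
  obtain ⟨S, c, hS⟩ := hK fun W => col (σ W)
  have hσ : ∀ I, σ (I.biUnion S) = ∑ t ∈ I, σ (S t) := fun I =>
    Finset.sum_biUnion (hS.pairwise_disjoint.set_pairwise _)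
  have hFS : ∀ m ∈ FS fun t : Fin d => σ (S t.succ),
      ∃ J : Finset (Fin (d + 1)), J.Nonempty ∧ 0 ∉ J ∧ m = σ (J.biUnion S) := by
    rintro m ⟨I, hI, rfl⟩
    refine ⟨I.map (Fin.succEmb d), hI.map, by simp [Fin.succ_ne_zero], ?_⟩
    rw [hσ, Finset.sum_map]
    rfl
  refine ⟨σ (S 0), fun t => σ (S t.succ), fun m hm => ?_, fun m hm => ?_⟩
  · obtain ⟨J, hJ, -, rfl⟩ := hFS m hm
    exact hp ⟨J.biUnion S, hJ.biUnion fun t _ => hS.nonempty t, rfl⟩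
  · obtain ⟨J, hJ, h0, rfl⟩ := hFS m hm
    have hins : σ (S 0) + σ (J.biUnion S) = σ ((insert 0 J).biUnion S) := by
      rw [hσ, hσ, Finset.sum_insert h0]
    have h0S : σ (S 0) = σ (({0} : Finset (Fin (d + 1))).biUnion S) := by
      rw [Finset.singleton_biUnion]
    rw [hins, hS.biUnion_eq _ (Finset.insert_nonempty _ _), h0S,
      hS.biUnion_eq _ (Finset.singleton_nonempty _)]

section Dynamics

variable {X : Type*} [TopologicalSpace X]

theorem hIter_eq_coe_zpow (T : X ≃ₜ X) (n : ℤ) : hIter T n = ⇑(T ^ n) := by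
  let toPerm : (X ≃ₜ X) →* Equiv.Perm X :=
    { toFun := Homeomorph.toEquiv, map_one' := rfl, map_mul' := fun _ _ => rfl }
  exact congrArg DFunLike.coe (map_zpow toPerm T n).symm

theorem hIter_hIter (T : X ≃ₜ X) (a b : ℤ) (x : X) :
    hIter T a (hIter T b x) = hIter T (a + b) x := by
  simp only [hIter_eq_coe_zpow, zpow_add, Homeomorph.mul_apply]

theorem MinimalTDS.exists_finset_forall_exists_hIter_mem [CompactSpace X] {T : X ≃ₜ X}
    (hT : MinimalTDS T) {U : Set X} (hU : IsOpen U) (hne : U.Nonempty) :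
    ∃ s : Finset ℤ, ∀ x, ∃ c ∈ s, hIter T c x ∈ U := by
  obtain ⟨s, hs⟩ := isCompact_univ.elim_finite_subcover (fun n => hIter T n ⁻¹' U)
    (fun n => hU.preimage (by rw [hIter_eq_coe_zpow]; exact (T ^ n).continuous))
    fun x _ => by
      obtain ⟨-, ⟨n, rfl⟩, hn⟩ := (hT x).exists_mem_open hU hne
      exact Set.mem_iUnion.2 ⟨n, hn⟩
  exact ⟨s, fun x => by simpa using hs (Set.mem_univ x)⟩

end Dynamics

theorem BirkhoffRecSet.of_containsArbLongFIP {P : Set ℤ} (hP : ContainsArbLongFIP P) (d : ℕ) :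
    BirkhoffRecSet d P := by
  intro X _ _ T hT U hU hne
  obtain ⟨s, hs⟩ := hT.exists_finset_forall_exists_hIter_mem hU hne
  obtain ⟨x₀, -⟩ := hne
  choose col hcol_mem hcol using fun m : ℤ => hs (hIter T m x₀)
  obtain ⟨a, n, hnP, hn⟩ :=
    hP.exists_FS_subset_forall_eq (fun m => (⟨col m, hcol_mem m⟩ : s)) d
  refine ⟨n, hnP, hIter T (col a) (hIter T a x₀), hcol a, Set.mem_iInter₂.2 fun m hm => ?_⟩
  have hm_col : col (a + m) = col a := congrArg Subtype.val (hn m hm)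
  have hexp : m + (col a + a) = col (a + m) + (a + m) := by rw [hm_col]; ring
  simpa only [Set.mem_preimage, hIter_hIter, hexp] using hcol (a + m)

theorem BirkhoffRecSet.exists_FS_subset {d : ℕ} {P : Set ℤ} (h : BirkhoffRecSet d P) :
    ∃ p : Fin d → ℤ, FS p ⊆ P := by
  have hmin : MinimalTDS (Homeomorph.refl Unit) := fun x => by
    rw [(Set.range_nonempty _).eq_univ]
    exact dense_univ
  obtain ⟨p, hp, -⟩ := h Unit (.refl Unit) hmin Set.univ isOpen_univ Set.univ_nonempty
  exact ⟨p, hp⟩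

/-- `F_{B_∞} = F_{fip}` : `P` is a Birkhoff recurrence set of every order iff `P`
contains finite IP-sets of arbitrarily long lengths. -/
theorem statement13 (P : Set ℤ) :
    (∀ d : ℕ, 1 ≤ d → BirkhoffRecSet d P) ↔ ContainsArbLongFIP P :=
  ⟨fun h k hk => (h k hk).exists_FS_subset, fun h d _ => .of_containsArbLongFIP h d⟩
end

section
/- A set A ⊆ ℤ satisfies: for every integer d ≥ 1 and every k ≥ 1 there is a finite sequence P of length at least k in ℤ with SG_d(P) ⊆ A, if and only if A contains finite IP-sets of arbitrarily long lengths (in the paper's notation, F_{fSG_∞} = F_{fip}). -/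
open scoped Classical
open MeasureTheory Filter Topology

lemma SGfin_subset_FS {d m : ℕ} (P : Fin m → ℤ) : SGfin d P ⊆ FS P := by
  rintro n ⟨k, i, hmono, -, rfl⟩
  refine ⟨Finset.image i Finset.univ, ⟨i 0, Finset.mem_image_of_mem i (Finset.mem_univ _)⟩, ?_⟩
  rw [Finset.sum_image (fun a _ b _ h => hmono.injective h)]

lemma FS_subset_SGfin {k m : ℕ} (hk : 1 ≤ k) (hkm : k ≤ m) (P : Fin m → ℤ) :
    FS (fun i : Fin k => P (Fin.castLE hkm i)) ⊆ SGfin k P := by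
  rintro n ⟨I, hI, rfl⟩
  have hc : I.card - 1 + 1 = I.card := Nat.succ_pred_eq_of_pos (Finset.card_pos.2 hI)
  set e := I.orderEmbOfFin (rfl : I.card = I.card)
  refine ⟨I.card - 1, fun t => Fin.castLE hkm (e (Fin.cast hc t)), ?_, ?_, ?_⟩
  · intro a b hab
    have h2 : e (Fin.cast hc a) < e (Fin.cast hc b) :=
      e.strictMono hab
    exact (Fin.lt_iff_val_lt_val).mpr h2
  · intro t
    have h1 : (e (Fin.cast hc t.succ) : ℕ) < k := (e _).isLt
    simp only [Fin.coe_castLE]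
    omega
  · have : ∀ f : Fin m → ℤ, ∑ t : Fin (I.card - 1 + 1), f (Fin.castLE hkm (e (Fin.cast hc t)))
        = ∑ t : Fin I.card, f (Fin.castLE hkm (e t)) := by
      intro f
      exact Fintype.sum_equiv (finCongr hc) _ _ (fun t => rfl)
    rw [this]
    refine (Finset.sum_bij (fun (t : Fin I.card) (_ : t ∈ Finset.univ) => e t)
      ?_ ?_ ?_ ?_).symm
    · intro t _
      exact Finset.orderEmbOfFin_mem I rfl t
    · intro a _ b _ hab
      exact e.injective hab
    · intro x hx
      have hx' : x ∈ Set.range e := by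
        rw [Finset.range_orderEmbOfFin]
        exact hx
      obtain ⟨t, ht⟩ := hx'
      exact ⟨t, Finset.mem_univ t, ht⟩
    · intro t _; rfl

/-- `F_{fSG_∞} = F_{fip}`. -/
theorem statement14 (A : Set ℤ) :
    (∀ d : ℕ, 1 ≤ d → ∀ k : ℕ, 1 ≤ k →
        ∃ m : ℕ, k ≤ m ∧ ∃ P : Fin m → ℤ, SGfin d P ⊆ A)
      ↔ ContainsArbLongFIP A := by
  constructor
  · intro h k hk
    obtain ⟨m, hkm, P, hP⟩ := h k hk k hk
    exact ⟨fun i => P (Fin.castLE hkm i),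
      fun n hn => hP (FS_subset_SGfin hk hkm P hn)⟩
  · intro h d hd k hk
    obtain ⟨p, hp⟩ := h k hk
    exact ⟨k, le_refl k, p, fun n hn => hp (SGfin_subset_FS p hn)⟩
end

section
/- Let (p_i)_{i≥1} be a sequence of positive integers with p_{i+1} > 2(p_1 + ⋯ + p_i) for all i, and let P = (p_1,p_2,…). Set B_1 = SG_1((p_1,p_3,p_5,…)), B_2 = SG_1((p_2,p_4,p_6,…)), and B_0 = SG_2(P) ∖ (B_1 ∪ B_2). Then for each i ∈ {0,1,2} there do not exist integers a_1 ≤ a_2 ≤ a_3 with {a_1, a_2, a_3, a_1+a_2, a_2+a_3, a_1+a_3} ⊆ B_i; consequently no B_i contains an SG_2-set, and the family F_{SG_2} does not have the Ramsey property (i.e. there is A ∈ F_{SG_2} and a decomposition A = A_1 ∪ A_2 with A_1 ∉ F_{SG_2} and A_2 ∉ F_{SG_2}). -/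
open scoped Classical
open MeasureTheory Filter Topology

/-!
Because `p n > 2 (p 0 + ⋯ + p (n - 1))`, expansions `∑ cⱼ pⱼ` with digits `cⱼ ∈ {0, 1, 2}` are
unique; hence if `x`, `y`, `x + y` are sums over the index sets `I`, `J`, `K`, then `I` and `J` are
disjoint and `K = I ∪ J`. Three elements of some `Bᵢ` whose pairwise sums lie in `Bᵢ` thus come
from pairwise disjoint `I₁, I₂, I₃` whose pairwise unions have gaps at most `2`. Choose `mₖ ∈ Iₖ`
with `mₖ + 1` in no other `Iₗ`: for `B₀` take a consecutive pair `mₖ, mₖ + 1 ∈ Iₖ` (without one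
all indices share a parity and the sum lies in `B₁ ∪ B₂`); for `B₁ ∪ B₂` all indices of all three
sets share one parity. The middle one of `m₁, m₂, m₃` then lies, together with its successor, in
a gap of the union of the other two sets, which is too long. Finally, an `SG₂`-set contains
`Q 0, Q 1, Q 2` and their pairwise sums, and `SG₂(P) = B₀ ∪ (B₁ ∪ B₂)`.
-/

open Finset

def BoundedGaps (d : ℕ) (I : Finset ℕ) : Prop :=
  ∀ a ∈ I, ∀ b ∈ I, a < b → ∃ c ∈ I, a < c ∧ c ≤ a + d

theorem boundedGaps_image_iff {d k : ℕ} {i : Fin (k + 1) → ℕ} (hi : StrictMono i) :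
    BoundedGaps d (univ.image i) ↔ ∀ t : Fin k, i t.succ - i t.castSucc ≤ d := by
  simp only [BoundedGaps, mem_image, mem_univ, true_and, forall_exists_index,
    forall_apply_eq_imp_iff, exists_exists_eq_and, hi.lt_iff_lt]
  constructor
  · intro h t
    obtain ⟨u, htu, hu⟩ := h t.castSucc t.succ t.castSucc_lt_succ
    have := hi.monotone (Fin.castSucc_lt_iff_succ_le.1 htu)
    omega
  · intro h t s hts
    obtain ⟨t, rfl⟩ := Fin.exists_castSucc_eq.2 (Fin.ne_last_of_lt hts)
    exact ⟨t.succ, t.castSucc_lt_succ, by have := h t; omega⟩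

theorem mem_SG_iff {d : ℕ} {P : ℕ → ℤ} {x : ℤ} :
    x ∈ SG d P ↔ ∃ I : Finset ℕ, I.Nonempty ∧ BoundedGaps d I ∧ x = ∑ j ∈ I, P j := by
  constructor
  · rintro ⟨k, i, hi, hgap, rfl⟩
    exact ⟨univ.image i, univ_nonempty.image i, (boundedGaps_image_iff hi).2 hgap,
      (sum_image fun _ _ _ _ h => hi.injective h).symm⟩
  · rintro ⟨I, hne, hgap, rfl⟩
    obtain ⟨k, hk⟩ : ∃ k, I.card = k + 1 := Nat.exists_eq_succ_of_ne_zero hne.card_pos.ne'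
    have himage : univ.image (I.orderEmbOfFin hk) = I := image_orderEmbOfFin_univ I hk
    refine ⟨k, I.orderEmbOfFin hk, (I.orderEmbOfFin hk).strictMono,
      (boundedGaps_image_iff (I.orderEmbOfFin hk).strictMono).1 (by rwa [himage]), ?_⟩
    conv_lhs => rw [← himage]
    exact sum_image fun _ _ _ _ h => (I.orderEmbOfFin hk).injective h

theorem singleton_mem_SG (d : ℕ) (P : ℕ → ℤ) (m : ℕ) : P m ∈ SG d P :=
  mem_SG_iff.2 ⟨{m}, singleton_nonempty m, by simp [BoundedGaps], by simp⟩

theorem add_mem_SG {d : ℕ} (P : ℕ → ℤ) {m m' : ℕ} (hlt : m < m') (hle : m' ≤ m + d) :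
    P m + P m' ∈ SG d P := by
  refine mem_SG_iff.2 ⟨{m, m'}, insert_nonempty m {m'}, ?_, by simp [hlt.ne]⟩
  simp only [BoundedGaps, mem_insert, mem_singleton]
  rintro a (rfl | rfl) b (rfl | rfl) hab <;> first | omega | exact ⟨_, Or.inr rfl, hab, hle⟩

theorem mem_SG_comp_two_mul_add_iff {d r : ℕ} (hr : r < 2) {P : ℕ → ℤ} {x : ℤ} :
    x ∈ SG d (fun i => P (2 * i + r)) ↔
      ∃ I : Finset ℕ, I.Nonempty ∧ BoundedGaps (2 * d) I ∧ (∀ j ∈ I, j % 2 = r) ∧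
        x = ∑ j ∈ I, P j := by
  rw [mem_SG_iff]
  constructor
  · rintro ⟨J, hne, hgap, rfl⟩
    refine ⟨J.image (2 * · + r), hne.image _, ?_, ?_, (sum_image fun _ _ _ _ h => by omega).symm⟩
    · simp only [BoundedGaps, mem_image]
      rintro _ ⟨a, ha, rfl⟩ _ ⟨b, hb, rfl⟩ hab
      obtain ⟨c, hc, hac, hca⟩ := hgap a ha b hb (by omega)
      exact ⟨_, ⟨c, hc, rfl⟩, by omega, by omega⟩
    · simp only [mem_image]
      rintro _ ⟨a, -, rfl⟩
      omega
  · rintro ⟨I, hne, hgap, hpar, rfl⟩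
    refine ⟨I.image (· / 2), hne.image _, ?_, ?_⟩
    · simp only [BoundedGaps, mem_image]
      rintro _ ⟨a, ha, rfl⟩ _ ⟨b, hb, rfl⟩ hab
      have := hpar a ha
      have := hpar b hb
      obtain ⟨c, hc, hac, hca⟩ := hgap a ha b hb (by omega)
      have := hpar c hc
      exact ⟨c / 2, ⟨c, hc, rfl⟩, by omega, by omega⟩
    · rw [sum_image fun a ha b hb _ => by have := hpar a ha; have := hpar b hb; omega]
      refine sum_congr rfl fun j hj => congrArg P ?_
      have := hpar j hj
      omega

namespace BoundedGaps

variable {d : ℕ} {K : Finset ℕ}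

theorem exists_mem_Ico (hK : BoundedGaps d K) {a b m : ℕ} (ha : a ∈ K) (hb : b ∈ K)
    (ham : a < m) (hmb : m ≤ b) : ∃ c ∈ K, m ≤ c ∧ c < m + d := by
  have hne : (K.filter (· < m)).Nonempty := ⟨a, mem_filter.2 ⟨ha, ham⟩⟩
  obtain ⟨hlast, hlast_lt⟩ := mem_filter.1 ((K.filter (· < m)).max'_mem hne)
  obtain ⟨c, hc, hlt, hle⟩ := hK _ hlast b hb (by omega)
  have : m ≤ c := by
    by_contra! hcm
    have := (K.filter (· < m)).le_max' c (mem_filter.2 ⟨hc, hcm⟩)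
    omega
  exact ⟨c, hc, this, by omega⟩

theorem lt_iff_lt_of_notMem (hK : BoundedGaps 2 K) {x y z : ℕ} (hy : y ∈ K) (hz : z ∈ K)
    (hx : x ∉ K) (hx₁ : x + 1 ∉ K) : y < x ↔ z < x := by
  have key : ∀ {y z}, y ∈ K → z ∈ K → y < x → ¬ x < z := fun hy hz hyx hxz => by
    obtain ⟨c, hc, hxc, hcx⟩ := hK.exists_mem_Ico hy hz hyx hxz.le
    obtain rfl | rfl : c = x ∨ c = x + 1 := by omega
    exacts [hx hc, hx₁ hc]
  have hxy : y ≠ x := fun h => hx (h ▸ hy)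
  have hxz : z ≠ x := fun h => hx (h ▸ hz)
  constructor
  · intro hyx; have := key hy hz hyx; omega
  · intro hzx; have := key hz hy hzx; omega

theorem false_of_triple {A B C : Finset ℕ} (hBC : BoundedGaps 2 (B ∪ C))
    (hAC : BoundedGaps 2 (A ∪ C)) (hAB : BoundedGaps 2 (A ∪ B)) {a b c : ℕ}
    (ha : a ∈ A) (hb : b ∈ B) (hc : c ∈ C)
    (ha' : a ∉ B ∪ C) (ha₁ : a + 1 ∉ B ∪ C) (hb' : b ∉ A ∪ C) (hb₁ : b + 1 ∉ A ∪ C)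
    (hc' : c ∉ A ∪ B) (hc₁ : c + 1 ∉ A ∪ B) : False := by
  have h₁ := hBC.lt_iff_lt_of_notMem (mem_union_left _ hb) (mem_union_right _ hc) ha' ha₁
  have h₂ := hAC.lt_iff_lt_of_notMem (mem_union_left _ ha) (mem_union_right _ hc) hb' hb₁
  have h₃ := hAB.lt_iff_lt_of_notMem (mem_union_left _ ha) (mem_union_right _ hb) hc' hc₁
  have : a ≠ b := fun h => ha' (mem_union_left _ (h ▸ hb))
  have : a ≠ c := fun h => ha' (mem_union_right _ (h ▸ hc))
  have : b ≠ c := fun h => hb' (mem_union_right _ (h ▸ hc))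
  -- whichever of `a`, `b`, `c` lies between the other two contradicts its `hᵢ`
  omega

theorem mod_two_eq_of_forall_succ_notMem (hK : BoundedGaps 2 K) (hne : K.Nonempty)
    (hsucc : ∀ m ∈ K, m + 1 ∉ K) : ∀ j ∈ K, j % 2 = K.min' hne % 2 := by
  intro j
  induction j using Nat.strong_induction_on with
  | _ j ih =>
    intro hj
    have hmin := K.min'_le j hj
    have hmin_succ : K.min' hne + 1 ≠ j := fun h => hsucc _ (K.min'_mem hne) (h ▸ hj)
    rcases lt_or_ge (K.min' hne) (j - 2) with hlt | hge
    · obtain ⟨c, hc, hjc, hcj⟩ := hK.exists_mem_Ico (K.min'_mem hne) hj hlt (by omega)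
      have : c + 1 ≠ j := fun h => hsucc c hc (h ▸ hj)
      have := ih c (by omega) hc
      omega
    · omega

end BoundedGaps

def TwiceSuperincreasing (p : ℕ → ℤ) : Prop :=
  ∀ n, 2 * ∑ j ∈ range n, p j < p n

namespace TwiceSuperincreasing

variable {p : ℕ → ℤ}

theorem pos (hp : TwiceSuperincreasing p) (n : ℕ) : 0 < p n := by
  induction n using Nat.strong_induction_on with
  | _ n ih =>
    exact (mul_nonneg zero_le_two (sum_nonneg fun j hj => (ih j (mem_range.1 hj)).le)).trans_lt
      (hp n)

theorem eq_zero_of_sum_mul_eq_zero (hp : TwiceSuperincreasing p) {c : ℕ → ℤ} (hc : ∀ j, |c j| ≤ 2) :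
    ∀ n, ∑ j ∈ range n, c j * p j = 0 → ∀ j < n, c j = 0 := by
  intro n
  induction n with
  | zero => simp
  | succ n ih =>
    intro h
    rw [sum_range_succ] at h
    have hbound : |∑ j ∈ range n, c j * p j| ≤ 2 * ∑ j ∈ range n, p j :=
      calc |∑ j ∈ range n, c j * p j|
          ≤ ∑ j ∈ range n, |c j * p j| := abs_sum_le_sum_abs _ _
        _ ≤ ∑ j ∈ range n, 2 * p j := sum_le_sum fun j _ => by
            rw [abs_mul, abs_of_pos (hp.pos j)]
            exact mul_le_mul_of_nonneg_right (hc j) (hp.pos j).le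
        _ = 2 * ∑ j ∈ range n, p j := (mul_sum _ _ _).symm
    have hcn : c n = 0 := by
      by_contra hne
      have : p n ≤ |c n * p n| := by
        rw [abs_mul, abs_of_pos (hp.pos n)]
        exact le_mul_of_one_le_left (hp.pos n).le (Int.one_le_abs hne)
      rw [eq_neg_of_add_eq_zero_right h, abs_neg] at this
      linarith [hp n]
    intro j hj
    rcases Nat.lt_succ_iff_lt_or_eq.1 hj with hj | rfl
    · exact ih (by simpa [hcn] using h) j hj
    · exact hcn

theorem disjoint_and_eq_union (hp : TwiceSuperincreasing p) {I J K : Finset ℕ}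
    (h : ∑ j ∈ I, p j + ∑ j ∈ J, p j = ∑ j ∈ K, p j) : Disjoint I J ∧ K = I ∪ J := by
  obtain ⟨n, hn⟩ := exists_nat_subset_range (I ∪ J ∪ K)
  have hI : I ⊆ range n := fun j hj => hn (by simp [hj])
  have hJ : J ⊆ range n := fun j hj => hn (by simp [hj])
  have hK : K ⊆ range n := fun j hj => hn (by simp [hj])
  set c : ℕ → ℤ := fun j =>
    (if j ∈ I then 1 else 0) + (if j ∈ J then 1 else 0) - (if j ∈ K then 1 else 0) with hc
  have hsum : ∑ j ∈ range n, c j * p j = 0 := by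
    simp only [hc, sub_mul, add_mul, ite_mul, one_mul, zero_mul, sum_sub_distrib, sum_add_distrib,
      sum_ite_mem, inter_eq_right.2 hI, inter_eq_right.2 hJ, inter_eq_right.2 hK]
    linarith
  have hzero : ∀ j, c j = 0 := by
    intro j
    by_cases hj : j < n
    · exact hp.eq_zero_of_sum_mul_eq_zero (fun j => by simp only [hc]; split_ifs <;> norm_num)
        n hsum j hj
    · have : j ∉ I ∪ J ∪ K := fun h => hj (mem_range.1 (hn h))
      simp only [mem_union, not_or] at this
      simp [hc, this]
  refine ⟨disjoint_left.2 fun j hjI hjJ => ?_, ?_⟩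
  · have := hzero j
    simp only [hc, hjI, hjJ] at this
    split_ifs at this <;> norm_num at this
  · ext j
    have := hzero j
    simp only [hc, mem_union] at this ⊢
    split_ifs at this <;> simp_all

end TwiceSuperincreasing

def ContainsSumTriple (B : Set ℤ) : Prop :=
  ∃ a b c : ℤ, a ∈ B ∧ b ∈ B ∧ c ∈ B ∧ a + b ∈ B ∧ b + c ∈ B ∧ a + c ∈ B

theorem ContainsSumTriple.mono {B B' : Set ℤ} (hB : ContainsSumTriple B) (h : B ⊆ B') :
    ContainsSumTriple B' :=
  let ⟨a, b, c, ha, hb, hc, hab, hbc, hac⟩ := hB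
  ⟨a, b, c, h ha, h hb, h hc, h hab, h hbc, h hac⟩

theorem containsSumTriple_of_SG_two_subset {Q : ℕ → ℤ} {B : Set ℤ} (h : SG 2 Q ⊆ B) :
    ContainsSumTriple B :=
  ⟨Q 0, Q 1, Q 2, h (singleton_mem_SG 2 Q 0), h (singleton_mem_SG 2 Q 1),
    h (singleton_mem_SG 2 Q 2), h (add_mem_SG Q (by norm_num) (by norm_num)),
    h (add_mem_SG Q (by norm_num) (by norm_num)), h (add_mem_SG Q (by norm_num) (by norm_num))⟩

section Lacunary

variable {p : ℕ → ℤ}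

theorem SG_comp_two_mul_add_subset {d r : ℕ} (hr : r < 2) :
    SG d (fun i => p (2 * i + r)) ⊆ SG (2 * d) p := fun _ hx =>
  let ⟨I, hne, hgap, _, hx⟩ := (mem_SG_comp_two_mul_add_iff hr).1 hx
  mem_SG_iff.2 ⟨I, hne, hgap, hx⟩

theorem exists_mod_two_of_mem_union {x : ℤ}
    (hx : x ∈ SG 1 (fun i => p (2 * i)) ∪ SG 1 (fun i => p (2 * i + 1))) :
    ∃ r, ∃ I : Finset ℕ, I.Nonempty ∧ BoundedGaps 2 I ∧ (∀ j ∈ I, j % 2 = r) ∧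
      x = ∑ j ∈ I, p j := by
  rcases hx with hx | hx
  · exact ⟨0, (mem_SG_comp_two_mul_add_iff (r := 0) two_pos).1 hx⟩
  · exact ⟨1, (mem_SG_comp_two_mul_add_iff (r := 1) one_lt_two).1 hx⟩

theorem exists_succ_mem_of_mem_diff {x : ℤ}
    (hx : x ∈ SG 2 p \ (SG 1 (fun i => p (2 * i)) ∪ SG 1 (fun i => p (2 * i + 1)))) :
    ∃ I : Finset ℕ, (∃ m ∈ I, m + 1 ∈ I) ∧ x = ∑ j ∈ I, p j := by
  obtain ⟨I, hne, hgap, rfl⟩ := mem_SG_iff.1 hx.1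
  refine ⟨I, ?_, rfl⟩
  by_contra! hsucc
  have hpar := hgap.mod_two_eq_of_forall_succ_notMem hne hsucc
  apply hx.2
  rcases Nat.mod_two_eq_zero_or_one (I.min' hne) with h | h
  · exact Or.inl ((mem_SG_comp_two_mul_add_iff (r := 0) two_pos).2
      ⟨I, hne, hgap, fun j hj => (hpar j hj).trans h, rfl⟩)
  · exact Or.inr ((mem_SG_comp_two_mul_add_iff (r := 1) one_lt_two).2
      ⟨I, hne, hgap, fun j hj => (hpar j hj).trans h, rfl⟩)

theorem TwiceSuperincreasing.disjoint_and_boundedGaps_union (hp : TwiceSuperincreasing p)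
    {I J : Finset ℕ} (h : ∑ j ∈ I, p j + ∑ j ∈ J, p j ∈ SG 2 p) :
    Disjoint I J ∧ BoundedGaps 2 (I ∪ J) := by
  obtain ⟨K, -, hK, hsum⟩ := mem_SG_iff.1 h
  obtain ⟨hIJ, rfl⟩ := hp.disjoint_and_eq_union hsum
  exact ⟨hIJ, hK⟩

theorem not_containsSumTriple_diff (hp : TwiceSuperincreasing p) :
    ¬ ContainsSumTriple (SG 2 p \ (SG 1 (fun i => p (2 * i)) ∪ SG 1 (fun i => p (2 * i + 1)))) := by
  rintro ⟨x, y, z, hx, hy, hz, hxy, hyz, hxz⟩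
  obtain ⟨A, ⟨a, ha, ha₁⟩, rfl⟩ := exists_succ_mem_of_mem_diff hx
  obtain ⟨B, ⟨b, hb, hb₁⟩, rfl⟩ := exists_succ_mem_of_mem_diff hy
  obtain ⟨C, ⟨c, hc, hc₁⟩, rfl⟩ := exists_succ_mem_of_mem_diff hz
  obtain ⟨hAB, gAB⟩ := hp.disjoint_and_boundedGaps_union hxy.1
  obtain ⟨hBC, gBC⟩ := hp.disjoint_and_boundedGaps_union hyz.1
  obtain ⟨hAC, gAC⟩ := hp.disjoint_and_boundedGaps_union hxz.1
  have hA : Disjoint A (B ∪ C) := disjoint_union_right.2 ⟨hAB, hAC⟩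
  have hB : Disjoint B (A ∪ C) := disjoint_union_right.2 ⟨hAB.symm, hBC⟩
  have hC : Disjoint C (A ∪ B) := disjoint_union_right.2 ⟨hAC.symm, hBC.symm⟩
  exact gBC.false_of_triple gAC gAB ha hb hc
    (disjoint_left.1 hA ha) (disjoint_left.1 hA ha₁) (disjoint_left.1 hB hb)
    (disjoint_left.1 hB hb₁) (disjoint_left.1 hC hc) (disjoint_left.1 hC hc₁)

theorem not_containsSumTriple_union (hp : TwiceSuperincreasing p) :
    ¬ ContainsSumTriple (SG 1 (fun i => p (2 * i)) ∪ SG 1 (fun i => p (2 * i + 1))) := by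
  rintro ⟨x, y, z, hx, hy, hz, hxy, hyz, hxz⟩
  obtain ⟨-, A, ⟨a, ha⟩, -, -, rfl⟩ := exists_mod_two_of_mem_union hx
  obtain ⟨-, B, ⟨b, hb⟩, -, -, rfl⟩ := exists_mod_two_of_mem_union hy
  obtain ⟨-, C, ⟨c, hc⟩, -, -, rfl⟩ := exists_mod_two_of_mem_union hz
  obtain ⟨rAB, _, -, gAB, pAB, hAB⟩ := exists_mod_two_of_mem_union hxy
  obtain ⟨rBC, _, -, gBC, pBC, hBC⟩ := exists_mod_two_of_mem_union hyz
  obtain ⟨rAC, _, -, gAC, pAC, hAC⟩ := exists_mod_two_of_mem_union hxz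
  obtain ⟨dAB, rfl⟩ := hp.disjoint_and_eq_union hAB
  obtain ⟨dBC, rfl⟩ := hp.disjoint_and_eq_union hBC
  obtain ⟨dAC, rfl⟩ := hp.disjoint_and_eq_union hAC
  have hA : Disjoint A (B ∪ C) := disjoint_union_right.2 ⟨dAB, dAC⟩
  have hB : Disjoint B (A ∪ C) := disjoint_union_right.2 ⟨dAB.symm, dBC⟩
  have hC : Disjoint C (A ∪ B) := disjoint_union_right.2 ⟨dAC.symm, dBC.symm⟩
  have hra := pAB a (mem_union_left _ ha)
  have hrb := pBC b (mem_union_left _ hb)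
  have hrc := pAC c (mem_union_right _ hc)
  have : rAB = rBC := (pAB b (mem_union_right _ hb)).symm.trans hrb
  have : rBC = rAC := (pBC c (mem_union_right _ hc)).symm.trans hrc
  exact gBC.false_of_triple gAC gAB ha hb hc
    (disjoint_left.1 hA ha) (fun h => by have := pBC _ h; omega)
    (disjoint_left.1 hB hb) (fun h => by have := pAC _ h; omega)
    (disjoint_left.1 hC hc) (fun h => by have := pAB _ h; omega)

end Lacunary

/-- `F_{SG₂}` does not have the Ramsey property. -/
theorem statement15 (p : ℕ → ℤ) (hpos : ∀ i, 0 < p i)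
    (hgrow : ∀ i, 2 * (∑ j ∈ Finset.range (i + 1), p j) < p (i + 1)) :
    (∀ B : Set ℤ,
        (B = SG 2 p \ (SG 1 (fun i => p (2 * i)) ∪ SG 1 (fun i => p (2 * i + 1)))
          ∨ B = SG 1 (fun i => p (2 * i)) ∨ B = SG 1 (fun i => p (2 * i + 1))) →
        (¬ ∃ a₁ a₂ a₃ : ℤ, a₁ ≤ a₂ ∧ a₂ ≤ a₃ ∧ a₁ ∈ B ∧ a₂ ∈ B ∧ a₃ ∈ B ∧
            a₁ + a₂ ∈ B ∧ a₂ + a₃ ∈ B ∧ a₁ + a₃ ∈ B) ∧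
        ¬ ∃ Q : ℕ → ℤ, SG 2 Q ⊆ B) ∧
    ¬ (∀ A A₁ A₂ : Set ℤ, (∃ Q : ℕ → ℤ, SG 2 Q ⊆ A) → A = A₁ ∪ A₂ →
        (∃ Q : ℕ → ℤ, SG 2 Q ⊆ A₁) ∨ (∃ Q : ℕ → ℤ, SG 2 Q ⊆ A₂)) := by
  have hp : TwiceSuperincreasing p
    | 0 => by simpa using hpos 0
    | n + 1 => hgrow n
  have hdiff := not_containsSumTriple_diff hp
  have hunion := not_containsSumTriple_union hp
  refine ⟨fun B hB => ?_, fun hramsey => ?_⟩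
  · have hfree : ¬ ContainsSumTriple B := by
      rcases hB with rfl | rfl | rfl
      · exact hdiff
      · exact fun h => hunion (h.mono Set.subset_union_left)
      · exact fun h => hunion (h.mono Set.subset_union_right)
    exact ⟨fun ⟨a₁, a₂, a₃, _, _, h⟩ => hfree ⟨a₁, a₂, a₃, h⟩,
      fun ⟨_, hQ⟩ => hfree (containsSumTriple_of_SG_two_subset hQ)⟩
  · have hsub : SG 1 (fun i => p (2 * i)) ∪ SG 1 (fun i => p (2 * i + 1)) ⊆ SG 2 p :=
      Set.union_subset (SG_comp_two_mul_add_subset (r := 0) two_pos)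
        (SG_comp_two_mul_add_subset (r := 1) one_lt_two)
    rcases hramsey _ _ _ ⟨p, subset_rfl⟩ (Set.union_sdiff_cancel hsub).symm with ⟨_, hQ⟩ | ⟨_, hQ⟩
    · exact hunion (containsSumTriple_of_SG_two_subset hQ)
    · exact hdiff (containsSumTriple_of_SG_two_subset hQ)
end

section
/- Let d ≥ 1 be an integer and P ⊆ ℤ. Then P is topologically intersective of order d if and only if P is a Birkhoff recurrence set of order d, where P is topologically intersective of order d means: for every syndetic set F ⊆ ℤ there exist n_1,…,n_d ∈ ℤ with FS({n_i}_{i=1}^d) ⊆ P and an a ∈ F with a + FS({n_i}_{i=1}^d) ⊆ F (equivalently, F ∩ ⋂_{n ∈ FS({n_i}_{i=1}^d)} (F − n) ≠ ∅). -/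
/-! Forward direction: in a minimal system the return times `N(x, U)` of a point `x ∈ U` to an
open set are syndetic, and a return time `a` with `a + FS(n) ⊆ N(x, U)` puts `Tᵃ x` in
`U ∩ ⋂ T⁻ᵐ U`. Backward direction: encode a syndetic `F` as the point `1_F` of the shift on
`{0,1}^ℤ` and pass to a minimal subsystem `Y` of its orbit closure; syndeticity makes the cylinder
`{z | z 0 = 1}` meet `Y`. A point of `Y` whose return times to the cylinder include `FS(n)`
exhibits a finite pattern that, because `Y` lies in the orbit closure of `1_F`, occurs in `F`
at some translate `a`. -/

open scoped Classical
open MeasureTheory Filter Topology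

section Iterates

variable {X : Type*} [TopologicalSpace X] (T : X ≃ₜ X)

theorem hIter_eq_zpow (n : ℤ) : hIter T n = ⇑(T ^ n) := by
  let toPerm : (X ≃ₜ X) →* Equiv.Perm X := ⟨⟨Homeomorph.toEquiv, rfl⟩, fun _ _ => rfl⟩
  exact congrArg DFunLike.coe (map_zpow toPerm T n).symm

theorem hIter_add (m n : ℤ) (x : X) : hIter T (m + n) x = hIter T m (hIter T n x) := by
  simp only [hIter_eq_zpow, zpow_add, Homeomorph.mul_apply]

theorem hIter_zero (x : X) : hIter T 0 x = x := by
  simp only [hIter_eq_zpow, zpow_zero, Homeomorph.one_apply]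

theorem hIter_one (x : X) : hIter T 1 x = T x := by
  simp only [hIter_eq_zpow, zpow_one]

theorem continuous_hIter (n : ℤ) : Continuous (hIter T n) := by
  rw [hIter_eq_zpow]
  exact (T ^ n).continuous

theorem preimage_hIter_of_preimage_eq {Y : Set X} (hY : T ⁻¹' Y = Y) (n : ℤ) :
    hIter T n ⁻¹' Y = Y := by
  have hY' : T.symm ⁻¹' Y = Y := by
    rw [Homeomorph.preimage_symm, ← hY, T.image_preimage, hY]
  rw [hIter_eq_zpow]
  induction n using Int.induction_on with
  | zero => rfl
  | succ k ih =>
    ext x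
    rw [Set.mem_preimage, zpow_add_one, Homeomorph.mul_apply, ← Set.mem_preimage, ih,
      ← Set.mem_preimage, hY]
  | pred k ih =>
    ext x
    rw [Set.mem_preimage, zpow_sub_one, Homeomorph.mul_apply, ← Set.mem_preimage, ih,
      Homeomorph.inv_apply, ← Set.mem_preimage, hY']

theorem coe_hIter_sets {Y : Set X} (hY : Y = T ⁻¹' Y) (n : ℤ) (y : Y) :
    (hIter (T.sets hY) n y).1 = hIter T n y := by
  have hperm : (T.sets hY).toEquiv =
      Equiv.Perm.subtypePerm (p := (· ∈ Y)) T.toEquiv fun x => (Set.ext_iff.1 hY x).symm :=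
    Equiv.ext fun _ => rfl
  rw [hIter, zIter, hperm, Equiv.Perm.subtypePerm_zpow]
  rfl

end Iterates

section OrbitClosure

variable {X : Type*} [TopologicalSpace X] (T : X ≃ₜ X)

def orbitClosure (x : X) : Set X := closure (Set.range fun n : ℤ => hIter T n x)

theorem mem_orbitClosure_self (x : X) : x ∈ orbitClosure T x :=
  subset_closure ⟨0, hIter_zero T x⟩

theorem preimage_orbitClosure (x : X) : T ⁻¹' orbitClosure T x = orbitClosure T x := by
  rw [orbitClosure, T.preimage_closure]
  congr 1
  ext y
  constructor
  · rintro ⟨n, hn⟩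
    refine ⟨n - 1, T.injective ?_⟩
    rw [← hIter_one T, ← hIter_add, add_sub_cancel]
    exact hn
  · rintro ⟨n, rfl⟩
    exact ⟨1 + n, (hIter_add T 1 n x).trans (hIter_one T _)⟩

theorem orbitClosure_subset {Y : Set X} (hYc : IsClosed Y) (hY : T ⁻¹' Y = Y) {x : X}
    (hx : x ∈ Y) : orbitClosure T x ⊆ Y :=
  closure_minimal (Set.range_subset_iff.2 fun n => (preimage_hIter_of_preimage_eq T hY n).ge hx)
    hYc

theorem exists_hIter_mem_of_mem_orbitClosure {x y : X} (hy : y ∈ orbitClosure T x) {V : Set X}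
    (hV : IsOpen V) (hyV : y ∈ V) : ∃ a : ℤ, hIter T a x ∈ V := by
  obtain ⟨_, hV, a, rfl⟩ := mem_closure_iff.1 hy V hV hyV
  exact ⟨a, hV⟩

theorem exists_minimal_invariant_subset [CompactSpace X] {Z : Set X} (hZc : IsClosed Z)
    (hZne : Z.Nonempty) (hZ : T ⁻¹' Z = Z) :
    ∃ Y ⊆ Z, Y.Nonempty ∧ IsClosed Y ∧ T ⁻¹' Y = Y ∧ ∀ y ∈ Y, Y ⊆ orbitClosure T y := by
  let S : Set (Set X) := {Y | Y.Nonempty ∧ IsClosed Y ∧ T ⁻¹' Y = Y}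
  have hchain : ∀ c ⊆ S, IsChain (· ⊆ ·) c → c.Nonempty → ∃ lb ∈ S, ∀ s ∈ c, lb ⊆ s := by
    intro c hcS hc hcne
    have := hcne.to_subtype
    have hdir : DirectedOn (· ⊇ ·) c := IsChain.directedOn (r := fun s t : Set X => s ⊇ t) hc.symm
    have hne : (⋂₀ c).Nonempty :=
      IsCompact.nonempty_sInter_of_directed_nonempty_isCompact_isClosed hdir
        (fun s hs => (hcS hs).1) (fun s hs => (hcS hs).2.1.isCompact) fun s hs => (hcS hs).2.1
    refine ⟨⋂₀ c, ⟨hne, isClosed_sInter fun s hs => (hcS hs).2.1, ?_⟩,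
      fun s => Set.sInter_subset_of_mem⟩
    rw [Set.preimage_sInter, Set.sInter_eq_biInter]
    exact Set.iInter₂_congr fun s hs => (hcS hs).2.2
  obtain ⟨Y, hYZ, hYmin⟩ := zorn_superset_nonempty S hchain Z ⟨hZne, hZc, hZ⟩
  obtain ⟨hYne, hYc, hY⟩ := hYmin.prop
  exact ⟨Y, hYZ, hYne, hYc, hY, fun y hy => hYmin.2
    ⟨⟨y, mem_orbitClosure_self T y⟩, isClosed_closure, preimage_orbitClosure T y⟩
    (orbitClosure_subset T hYc hY hy)⟩

theorem minimalTDS_sets {Y : Set X} (hY : Y = T ⁻¹' Y) (hmin : ∀ y ∈ Y, Y ⊆ orbitClosure T y) :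
    MinimalTDS (T.sets hY) := by
  intro y
  rw [Topology.IsInducing.subtypeVal.dense_iff]
  intro z
  simp only [← Set.range_comp, Function.comp_def, coe_hIter_sets]
  exact hmin y y.2 z.2

end OrbitClosure

theorem syndetic_Nset {X : Type*} [TopologicalSpace X] [CompactSpace X] {T : X ≃ₜ X}
    (hT : MinimalTDS T) {U : Set X} (hU : IsOpen U) (hUne : U.Nonempty) (x : X) :
    Syndetic (Nset T x U) := by
  obtain ⟨t, ht⟩ := isCompact_univ.elim_finite_subcover (fun n : ℤ => hIter T n ⁻¹' U)
    (fun n => hU.preimage (continuous_hIter T n)) fun y _ => by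
      obtain ⟨_, hzU, n, rfl⟩ := (hT y).inter_open_nonempty U hU hUne
      exact Set.mem_iUnion.2 ⟨n, hzU⟩
  let K := t.sup Int.natAbs
  refine ⟨2 * K, fun i => ?_⟩
  obtain ⟨n, hnt, hn⟩ := Set.mem_iUnion₂.1 (ht (Set.mem_univ (hIter T (i + K) x)))
  have hnK : n.natAbs ≤ K := Finset.le_sup (f := Int.natAbs) hnt
  refine ⟨n + (i + K), by omega, by omega, ?_⟩
  show hIter T (n + (i + K)) x ∈ U
  rw [hIter_add]
  exact hn

section Shift

variable {α : Type*} [TopologicalSpace α]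

def shift : (ℤ → α) ≃ₜ (ℤ → α) where
  toFun x n := x (n + 1)
  invFun x n := x (n - 1)
  left_inv x := funext fun n => by simp
  right_inv x := funext fun n => by simp
  continuous_toFun := continuous_pi fun n => continuous_apply (n + 1)
  continuous_invFun := continuous_pi fun n => continuous_apply (n - 1)

theorem hIter_shift_apply (m : ℤ) (x : ℤ → α) (i : ℤ) : hIter shift m x i = x (i + m) := by
  rw [hIter_eq_zpow]
  induction m using Int.induction_on generalizing x i with
  | zero => simp
  | succ k ih =>
    rw [zpow_add_one, Homeomorph.mul_apply, ih]
    exact congrArg x (by ring)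
  | pred k ih =>
    rw [zpow_sub_one, Homeomorph.mul_apply, ih]
    exact congrArg x (by ring)

theorem isClopen_setOf_apply_eq [DiscreteTopology α] (i : ℤ) (b : α) :
    IsClopen {z : ℤ → α | z i = b} :=
  (isClopen_discrete {b}).preimage (continuous_apply i)

end Shift

theorem exists_apply_eq_true_of_mem_orbitClosure {F : Set ℤ} (hF : Syndetic F) {z : ℤ → Bool}
    (hz : z ∈ orbitClosure shift F.boolIndicator) : ∃ j, z j = true := by
  obtain ⟨N, hN⟩ := hF
  let C : Set (ℤ → Bool) := ⋃ j ∈ Finset.Icc (0 : ℤ) N, {z | z j = true}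
  have hC : IsClosed C := Set.Finite.isClosed_biUnion (Finset.finite_toSet _) fun j _ =>
    (isClopen_setOf_apply_eq j true).isClosed
  have horbit : Set.range (fun m : ℤ => hIter shift m F.boolIndicator) ⊆ C := by
    rintro _ ⟨m, rfl⟩
    obtain ⟨j, hmj, hjN, hjF⟩ := hN m
    refine Set.mem_biUnion (x := j - m) (Finset.mem_Icc.2 ⟨by omega, by omega⟩) ?_
    show hIter shift m F.boolIndicator (j - m) = true
    rw [hIter_shift_apply, sub_add_cancel, ← Set.mem_iff_boolIndicator]
    exact hjF
  obtain ⟨j, -, hj⟩ := Set.mem_iUnion₂.1 (closure_minimal horbit hC hz)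
  exact ⟨j, hj⟩

theorem exists_add_mem_of_mem_orbitClosure {F S : Set ℤ} (hS : S.Finite) {z : ℤ → Bool}
    (hz : z ∈ orbitClosure shift F.boolIndicator) (hzS : ∀ m ∈ S, z m = true) :
    ∃ a, ∀ m ∈ S, a + m ∈ F := by
  have hV : IsOpen {z : ℤ → Bool | ∀ m ∈ S, z m = true} := by
    simpa only [Set.ofPred_forall] using
      hS.isOpen_biInter fun m _ => (isClopen_setOf_apply_eq m true).isOpen
  obtain ⟨a, ha⟩ := exists_hIter_mem_of_mem_orbitClosure shift hz hV hzS
  refine ⟨a, fun m hm => ?_⟩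
  have := ha m hm
  rwa [hIter_shift_apply, ← Set.mem_iff_boolIndicator, add_comm] at this

theorem finite_FS {d : ℕ} (n : Fin d → ℤ) : (FS n).Finite :=
  (Set.finite_range fun I : Finset (Fin d) => ∑ i ∈ I, n i).subset fun _ ⟨I, _, hm⟩ => ⟨I, hm.symm⟩

def TopIntersective (d : ℕ) (P : Set ℤ) : Prop :=
  ∀ F : Set ℤ, Syndetic F → ∃ n : Fin d → ℤ, FS n ⊆ P ∧ ∃ a ∈ F, ∀ m ∈ FS n, a + m ∈ F

theorem birkhoffRecSet_of_topIntersective {d : ℕ} {P : Set ℤ} (hP : TopIntersective d P) :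
    BirkhoffRecSet d P := by
  intro X _ _ T hT U hU ⟨x, hx⟩
  obtain ⟨n, hnP, a, ha, haF⟩ := hP _ (syndetic_Nset hT hU ⟨x, hx⟩ x)
  refine ⟨n, hnP, hIter T a x, ha, Set.mem_iInter₂.2 fun m hm => ?_⟩
  show hIter T m (hIter T a x) ∈ U
  rw [← hIter_add, add_comm]
  exact haF m hm

theorem topIntersective_of_birkhoffRecSet {d : ℕ} {P : Set ℤ} (hP : BirkhoffRecSet d P) :
    TopIntersective d P := by
  intro F hF
  let _ : MetricSpace (ℤ → Bool) := TopologicalSpace.metrizableSpaceMetric _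
  obtain ⟨Y, hYZ, hYne, hYc, hY, hYmin⟩ := exists_minimal_invariant_subset shift isClosed_closure
    ⟨_, mem_orbitClosure_self shift F.boolIndicator⟩ (preimage_orbitClosure shift _)
  have : CompactSpace Y := isCompact_iff_compactSpace.1 hYc.isCompact
  let S : Y ≃ₜ Y := shift.sets hY.symm
  have hS (m : ℤ) (y : Y) : (hIter S m y).1 0 = y.1 m := by
    rw [coe_hIter_sets, hIter_shift_apply, zero_add]
  let U : Set Y := {y | y.1 0 = true}
  have hU : IsOpen U := (isClopen_setOf_apply_eq 0 true).isOpen.preimage continuous_subtype_val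
  have hUne : U.Nonempty := by
    obtain ⟨y, hy⟩ := hYne
    obtain ⟨j, hj⟩ := exists_apply_eq_true_of_mem_orbitClosure hF (hYZ hy)
    exact ⟨hIter S j ⟨y, hy⟩, (hS j _).trans hj⟩
  obtain ⟨n, hnP, w, hwU, hw⟩ := hP Y S (minimalTDS_sets shift hY.symm hYmin) U hU hUne
  have hwS : ∀ m ∈ insert 0 (FS n), w.1 m = true := by
    rintro m (rfl | hm)
    · exact hwU
    · exact (hS m w).symm.trans (Set.mem_iInter₂.1 hw m hm)
  obtain ⟨a, ha⟩ := exists_add_mem_of_mem_orbitClosure ((finite_FS n).insert 0) (hYZ w.2) hwS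
  exact ⟨n, hnP, a, by simpa using ha 0 (Set.mem_insert _ _),
    fun m hm => ha m (Set.mem_insert_of_mem _ hm)⟩

theorem statement16_general (d : ℕ) (P : Set ℤ) :
    (∀ F : Set ℤ, Syndetic F →
        ∃ n : Fin d → ℤ, FS n ⊆ P ∧ ∃ a ∈ F, ∀ m ∈ FS n, a + m ∈ F)
      ↔ BirkhoffRecSet d P :=
  ⟨birkhoffRecSet_of_topIntersective, topIntersective_of_birkhoffRecSet⟩

/-- `P` is topologically intersective of order `d` iff it is a Birkhoff
recurrence set of order `d`. -/
theorem statement16 (d : ℕ) (hd : 1 ≤ d) (P : Set ℤ) :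
    (∀ F : Set ℤ, Syndetic F →
        ∃ n : Fin d → ℤ, FS n ⊆ P ∧ ∃ a ∈ F, ∀ m ∈ FS n, a + m ∈ F)
      ↔ BirkhoffRecSet d P :=
  statement16_general d P
end
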